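/- Let n ≥ 2 be an even integer. Then every nonempty (n+1)-regular induced subgraph of the n-dimensional grid has girth exactly 4. -/

import Mathlib

/-- The `n`-dimensional grid: the unit-distance graph on `ℤ^n`. Two points are adjacent
iff they differ by exactly 1 in one coordinate and agree in all others, i.e. iff the sum
of the absolute coordinate differences is 1. -/
def grid (n : ℕ) : SimpleGraph (Fin n → ℤ) where
  Adj x y := ∑ i, |x i - y i| = 1
  symm := ⟨fun x y h => by
    rwa [Finset.sum_congr rfl fun i _ => abs_sub_comm (y i) (x i)]⟩
  loopless := ⟨fun x h => by simp at h⟩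

/-- The induced subgraph of the `n`-dimensional grid on `S` is `k`-regular:
every vertex has exactly `k` neighbours. -/
def IsRegularInduced (n : ℕ) (S : Set (Fin n → ℤ)) (k : ℕ) : Prop :=
  ∀ v : S, (((grid n).induce S).neighborSet v).ncard = k

/-!
The parity of the coordinate sum properly 2-colours the grid, so every cycle in an induced
subgraph has even length and the girth is at least 4; it is exactly 4 once `S` contains the
corners of a unit square. Suppose it does not. If `x` and `x ± eᵢ` both lie in `S`, a common
step `±eⱼ` (`j ≠ i`) from both would close a square, so their steps off the `i`-axis are disjoint
among the `2n - 2` available ones. Each of the two points has at least `n - 1` such steps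
(degree `n + 1`, at most 2 along the `i`-axis), hence `x` has both neighbours `x + eᵢ` and
`x - eᵢ`. So the neighbours of every point come in pairs `x ± eᵢ`, and the degree `n + 1` would
be even.
-/

open Finset SimpleGraph

namespace SimpleGraph

variable {V : Type*} {G : SimpleGraph V}

theorem four_le_egirth_of_colorable_two (h : G.Colorable 2) : 4 ≤ G.egirth := by
  rw [le_egirth]
  intro a w hw
  have heven := two_colorable_iff_forall_loop_even.mp h a w
  have hthree := hw.three_le_length
  have : 4 ≤ w.length := by rcases heven with ⟨k, hk⟩; omega
  exact_mod_cast this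

theorem egirth_le_four {a b c d : V} (hab : G.Adj a b) (hbc : G.Adj b c) (hcd : G.Adj c d)
    (hda : G.Adj d a) (hac : a ≠ c) (hbd : b ≠ d) : G.egirth ≤ 4 := by
  have hcycle : (Walk.cons hab (.cons hbc (.cons hcd (.cons hda .nil)))).IsCycle := by
    simp [Walk.cons_isCycle_iff, hab.ne, hbc.ne, hcd.ne, hda.ne, hab.ne.symm, hda.ne.symm, hac,
      hbd, hac.symm]
  exact_mod_cast egirth_le_length hcycle

end SimpleGraph

section Units

variable {ι : Type*} [DecidableEq ι]

theorem exists_eq_single_of_sum_abs_eq_one [Fintype ι] {d : ι → ℤ} (h : ∑ j, |d j| = 1) :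
    ∃ i, ∃ u : ℤˣ, d = Pi.single i (u : ℤ) := by
  obtain ⟨i, hi⟩ : ∃ i, d i ≠ 0 := by
    by_contra! h0
    simp [h0] at h
  have hsplit := add_sum_erase univ (fun j => |d j|) (mem_univ i)
  have hrest_nonneg : 0 ≤ ∑ j ∈ univ.erase i, |d j| := sum_nonneg fun j _ => abs_nonneg _
  have hi_abs : |d i| = 1 := by have := Int.one_le_abs hi; omega
  have hrest : ∑ j ∈ univ.erase i, |d j| = 0 := by omega
  refine ⟨i, (Int.isUnit_iff_abs_eq.mpr hi_abs).unit, funext fun j => ?_⟩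
  by_cases hj : j = i
  · subst hj; simp
  · rw [Pi.single_eq_of_ne hj]
    exact abs_eq_zero.mp <| (sum_eq_zero_iff_of_nonneg fun j _ => abs_nonneg _).mp hrest j
      (mem_erase.mpr ⟨hj, mem_univ j⟩)

theorem single_units_injective :
    Function.Injective fun p : ι × ℤˣ => (Pi.single p.1 (p.2 : ℤ) : ι → ℤ) := by
  rintro ⟨i, u⟩ ⟨j, v⟩ h
  have hi : (u : ℤ) = (Pi.single j (v : ℤ) : ι → ℤ) i := by simpa using congrFun h i
  obtain rfl : i = j := by
    by_contra hij
    rw [Pi.single_eq_of_ne hij] at hi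
    exact u.ne_zero hi
  simpa [Units.ext_iff] using hi

theorem card_filter_fst_eq [Fintype ι] (i : ι) :
    #{p : ι × ℤˣ | p.1 = i} = 2 := by
  rw [show ({p | p.1 = i} : Finset (ι × ℤˣ)) = {i} ×ˢ univ by
    ext; simp only [mem_filter, mem_univ, true_and, mem_product, mem_singleton, and_true]]
  simp

end Units

variable {n : ℕ} {S : Set (Fin n → ℤ)}

theorem grid_adj_iff {x y : Fin n → ℤ} :
    (grid n).Adj x y ↔ ∃ i, ∃ u : ℤˣ, y = x + Pi.single i (u : ℤ) := by
  change ∑ j, |x j - y j| = 1 ↔ _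
  constructor
  · intro h
    simp_rw [abs_sub_comm (x _)] at h
    obtain ⟨i, u, hd⟩ := exists_eq_single_of_sum_abs_eq_one (d := y - x) h
    exact ⟨i, u, eq_add_of_sub_eq' hd⟩
  · rintro ⟨i, u, rfl⟩
    simp [Pi.single_apply, apply_ite, Int.isUnit_iff_abs_eq.mp u.isUnit]

theorem grid_adj_add_single (x : Fin n → ℤ) (i : Fin n) (u : ℤˣ) :
    (grid n).Adj x (x + Pi.single i (u : ℤ)) :=
  grid_adj_iff.mpr ⟨i, u, rfl⟩

variable (n) in
def gridColoring : (grid n).Coloring (ZMod 2) :=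
  Coloring.mk (fun x => ((∑ i, x i : ℤ) : ZMod 2)) fun {x y} h => by
    obtain ⟨i, u, rfl⟩ := grid_adj_iff.mp h
    rcases Int.units_eq_one_or u with rfl | rfl <;> simp [sum_add_distrib]

theorem colorable_two_induce_grid : ((grid n).induce S).Colorable 2 :=
  (gridColoring n).colorable.of_hom (Embedding.induce S).toHom

variable (S) in
def HasUnitSquare : Prop :=
  ∃ x i j, ∃ u v : ℤˣ, i ≠ j ∧ x ∈ S ∧ x + Pi.single i (u : ℤ) ∈ S ∧ x + Pi.single j (v : ℤ) ∈ S ∧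
    x + Pi.single i (u : ℤ) + Pi.single j (v : ℤ) ∈ S

theorem HasUnitSquare.egirth_induce_grid_le_four (h : HasUnitSquare S) :
    ((grid n).induce S).egirth ≤ 4 := by
  obtain ⟨x, i, j, u, v, hij, hx, hxi, hxj, hxij⟩ := h
  have hu := u.ne_zero
  refine egirth_le_four (a := ⟨x, hx⟩) (b := ⟨_, hxi⟩) (c := ⟨_, hxij⟩) (d := ⟨_, hxj⟩)
    (grid_adj_add_single ..) (grid_adj_add_single ..) ?_ (grid_adj_add_single ..).symm ?_ ?_
  · change (grid n).Adj (x + Pi.single i (u : ℤ) + Pi.single j (v : ℤ)) (x + Pi.single j (v : ℤ))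
    rw [add_right_comm]
    exact (grid_adj_add_single ..).symm
  all_goals
    intro h
    simpa [hij, hu] using congrFun (congrArg Subtype.val h) i

open Classical in
variable (S) in
noncomputable def unitSteps (x : Fin n → ℤ) : Finset (Fin n × ℤˣ) :=
  {p | x + Pi.single p.1 (p.2 : ℤ) ∈ S}

@[simp]
theorem mem_unitSteps {x : Fin n → ℤ} {p : Fin n × ℤˣ} :
    p ∈ unitSteps S x ↔ x + Pi.single p.1 (p.2 : ℤ) ∈ S := by
  simp [unitSteps]

theorem card_unitSteps {x : Fin n → ℤ} (hx : x ∈ S) :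
    #(unitSteps S x) = (((grid n).induce S).neighborSet ⟨x, hx⟩).ncard := by
  rw [← Set.ncard_coe_finset]
  refine Set.ncard_congr (fun p hp => (⟨x + Pi.single p.1 (p.2 : ℤ), mem_unitSteps.mp hp⟩ : S))
    (fun p _ => by exact grid_adj_add_single x p.1 p.2) ?_ ?_
  · intro p q _ _ h
    exact single_units_injective (add_left_cancel (congrArg Subtype.val h))
  · rintro ⟨y, hy⟩ hadj
    obtain ⟨i, u, rfl⟩ := grid_adj_iff.mp hadj
    exact ⟨(i, u), by simpa using hy, rfl⟩

theorem card_unitSteps_filter_fst_eq (hsq : ¬ HasUnitSquare S)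
    (hreg : IsRegularInduced n S (n + 1)) {x : Fin n → ℤ} (hx : x ∈ S) {i : Fin n} {u : ℤˣ}
    (hy : x + Pi.single i (u : ℤ) ∈ S) : #{p ∈ unitSteps S x | p.1 = i} = 2 := by
  set y := x + Pi.single i (u : ℤ)
  have hdeg : ∀ z ∈ S,
      #{p ∈ unitSteps S z | p.1 = i} + #{p ∈ unitSteps S z | p.1 ≠ i} = n + 1 := fun z hz => by
    rw [card_filter_add_card_filter_not, card_unitSteps hz, hreg]
  have hfiber : ∀ z, #{p ∈ unitSteps S z | p.1 = i} ≤ 2 := fun z =>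
    card_filter_fst_eq i ▸ card_le_card (filter_subset_filter _ (subset_univ _))
  have hdisj : Disjoint {p ∈ unitSteps S x | p.1 ≠ i} {p ∈ unitSteps S y | p.1 ≠ i} := by
    rw [Finset.disjoint_left]
    rintro ⟨j, v⟩ hxj hyj
    simp only [mem_filter, mem_unitSteps] at hxj hyj
    exact hsq ⟨x, i, j, u, v, Ne.symm hxj.2, hx, hy, hxj.1, hyj.1⟩
  have hoff : #{p ∈ unitSteps S x | p.1 ≠ i} + #{p ∈ unitSteps S y | p.1 ≠ i} + 2 ≤ 2 * n := by
    rw [← card_union_of_disjoint hdisj]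
    calc _ ≤ #{p : Fin n × ℤˣ | ¬p.1 = i} + #{p : Fin n × ℤˣ | p.1 = i} :=
          add_le_add (card_le_card (union_subset (filter_subset_filter _ (subset_univ _))
            (filter_subset_filter _ (subset_univ _)))) (card_filter_fst_eq i).ge
      _ = 2 * n := by
        rw [add_comm, card_filter_add_card_filter_not]
        simp [mul_comm]
  have := hdeg x hx
  have := hdeg y hy
  have := hfiber x
  have := hfiber y
  omega

theorem even_card_unitSteps (hsq : ¬ HasUnitSquare S)
    (hreg : IsRegularInduced n S (n + 1)) {x : Fin n → ℤ} (hx : x ∈ S) :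
    Even #(unitSteps S x) := by
  rw [card_eq_sum_card_fiberwise (f := Prod.fst) (t := univ) fun _ _ => mem_univ _]
  refine even_sum _ fun i _ => ?_
  obtain h | ⟨⟨j, u⟩, hp⟩ := ({p ∈ unitSteps S x | p.1 = i}).eq_empty_or_nonempty
  · simp [h]
  · obtain ⟨hmem, rfl⟩ : (j, u) ∈ unitSteps S x ∧ j = i := mem_filter.mp hp
    rw [card_unitSteps_filter_fst_eq hsq hreg hx (mem_unitSteps.mp hmem)]
    exact even_two

theorem hasUnitSquare_of_isRegularInduced (heven : Even n)
    (hS : S.Nonempty) (hreg : IsRegularInduced n S (n + 1)) : HasUnitSquare S := by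
  by_contra hsq
  obtain ⟨x, hx⟩ := hS
  have h := even_card_unitSteps hsq hreg hx
  rw [card_unitSteps hx, hreg] at h
  exact Nat.not_even_iff_odd.mpr heven.add_one h

theorem girth_eq_four_of_even_dim_general (n : ℕ) (heven : Even n)
    (S : Set (Fin n → ℤ)) (hS : S.Nonempty) (hreg : IsRegularInduced n S (n + 1)) :
    ((grid n).induce S).egirth = 4 :=
  le_antisymm (hasUnitSquare_of_isRegularInduced heven hS hreg).egirth_induce_grid_le_four
    (four_le_egirth_of_colorable_two colorable_two_induce_grid)

theorem girth_eq_four_of_even_dim (n : ℕ) (hn : 2 ≤ n) (heven : Even n)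
    (S : Set (Fin n → ℤ)) (hS : S.Nonempty) (hreg : IsRegularInduced n S (n + 1)) :
    ((grid n).induce S).egirth = 4 :=
  girth_eq_four_of_even_dim_general n heven S hS hreg
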